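/- Let F : 2^Ω → ℝ be normalized and monotone, let f̃ be its partition multilinear extension, let P = {x ∈ [0,1]^Ω : Σ_{e ∈ Ω_i} x_e ≤ 1 for all i ∈ N} be the partition matroid polytope and 𝓕 = {x ∈ P : Σ_{e ∈ Ω_i} x_e = 1 for all i ∈ N} its categorical face. Then (a) for every x ∈ P there exists x̄ ∈ 𝓕 with f̃(x̄) ≥ f̃(x), so that the maximum of f̃ over P is attained on 𝓕; and (b) the maximum of f̃ over 𝓕 is at least max_{A ∈ I} F(A). -/

import Mathlib

open Finset
open scoped Classical

/-- Feasibility in the partition matroid: at most one element per block. -/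
def feasible {N Ω : Type*} [Fintype N] [Fintype Ω] (blk : Ω → N) (A : Finset Ω) : Prop :=
  ∀ i : N, (A.filter (fun e => blk e = i)).card ≤ 1

/-- Per-agent probability factor `p_i(A; x)`. -/
noncomputable def blockProb {N Ω : Type*} [Fintype N] [Fintype Ω] (blk : Ω → N) (x : Ω → ℝ)
    (A : Finset Ω) (i : N) : ℝ :=
  if A.filter (fun e => blk e = i) = ∅ then
    1 - ∑ e ∈ Finset.univ.filter (fun e => blk e = i), x e
  else ∑ e ∈ A.filter (fun e => blk e = i), x e

/-- The partition multilinear extension. -/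
noncomputable def pme {N Ω : Type*} [Fintype N] [Fintype Ω] (blk : Ω → N) (F : Finset Ω → ℝ)
    (x : Ω → ℝ) : ℝ :=
  ∑ A ∈ Finset.univ.filter (fun A => feasible blk A), F A * ∏ i : N, blockProb blk x A i

/-- Partial derivative of `f` in coordinate `e` at `x`. -/
noncomputable def pderiv {Ω : Type*} (f : (Ω → ℝ) → ℝ) (e : Ω) (x : Ω → ℝ) : ℝ :=
  deriv (fun t : ℝ => f (Function.update x e t)) (x e)

/-- Membership in the partition matroid polytope `P`. -/
def memPolytope {N Ω : Type*} [Fintype N] [Fintype Ω] (blk : Ω → N) (x : Ω → ℝ) : Prop :=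
  (∀ e, 0 ≤ x e ∧ x e ≤ 1) ∧
    ∀ i : N, ∑ e ∈ Finset.univ.filter (fun e => blk e = i), x e ≤ 1

/-- Membership in the categorical face `𝓕` of the partition matroid polytope. -/
def memFace {N Ω : Type*} [Fintype N] [Fintype Ω] (blk : Ω → N) (x : Ω → ℝ) : Prop :=
  (∀ e, 0 ≤ x e ∧ x e ≤ 1) ∧
    ∀ i : N, ∑ e ∈ Finset.univ.filter (fun e => blk e = i), x e = 1

/-- Submodularity of a set function. -/
def Submodular {Ω : Type*} [Fintype Ω] (F : Finset Ω → ℝ) : Prop :=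
  ∀ A B : Finset Ω, A ⊆ B → ∀ e ∉ B, F (insert e B) - F B ≤ F (insert e A) - F A

/-!
In each coordinate `x_e` the PME is affine, with slope
`∑ (F (A ∪ {e}) - F A) * ∏_{j ≠ blk e} p_j(A; x)` over the feasible `A` missing the block of `e`;
on `P` the factors `p_j` are nonnegative, so monotonicity of `F` makes the slope nonnegative.
Raising one coordinate per block until that block sums to one thus moves any point of `P` into `𝓕`
without decreasing the PME. At the indicator vector of a feasible `A` the PME equals `F A`, and
that vector lies in `P`, so (b) follows from (a).
-/

lemma Finset.sum_update_of_mem_eq_add_sub {ι M : Type*} [DecidableEq ι] [AddCommGroup M]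
    {s : Finset ι} {i : ι} (h : i ∈ s) (f : ι → M) (b : M) :
    ∑ j ∈ s, Function.update f i b j = ∑ j ∈ s, f j + (b - f i) := by
  rw [Finset.sum_update_of_mem h, Finset.sum_eq_add_sum_sdiff_singleton_of_mem h f]
  abel

lemma Finset.eq_empty_or_eq_singleton_of_card_le_one {α : Type*} {s : Finset α} (h : #s ≤ 1) :
    s = ∅ ∨ ∃ a, s = {a} := by
  rcases Nat.le_one_iff_eq_zero_or_eq_one.1 h with h | h
  exacts [Or.inl (card_eq_zero.1 h), Or.inr (card_eq_one.1 h)]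

section PartitionMatroid

variable {N Ω : Type*} [Fintype Ω] {blk : Ω → N}

noncomputable def blockSum (blk : Ω → N) (x : Ω → ℝ) (i : N) : ℝ :=
  ∑ e ∈ univ.filter (fun e => blk e = i), x e

lemma blockSum_update_self (x : Ω → ℝ) (e : Ω) (t : ℝ) :
    blockSum blk (Function.update x e t) (blk e) = blockSum blk x (blk e) + (t - x e) :=
  Finset.sum_update_of_mem_eq_add_sub (by simp) x t

lemma blockSum_update_of_ne (x : Ω → ℝ) {e : Ω} (t : ℝ) {i : N} (h : blk e ≠ i) :
    blockSum blk (Function.update x e t) i = blockSum blk x i :=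
  Finset.sum_update_of_notMem (by simp [h]) x t

lemma blockSum_indicator (A : Finset Ω) (i : N) :
    blockSum blk (fun e => if e ∈ A then 1 else 0) i = #(A.filter (fun e => blk e = i)) := by
  rw [blockSum, sum_boole, filter_filter]
  congr 2
  ext e
  simp [and_comm]

variable [Fintype N]

lemma feasible_of_subset {A B : Finset Ω} (hB : feasible blk B) (hAB : A ⊆ B) : feasible blk A :=
  fun i => (card_le_card (filter_subset_filter _ hAB)).trans (hB i)

lemma feasible_insert {A : Finset Ω} {e : Ω} (hA : feasible blk A)
    (he : A.filter (fun e' => blk e' = blk e) = ∅) : feasible blk (insert e A) := by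
  intro i
  rw [filter_insert]
  split_ifs with hi
  · subst hi
    simp [he]
  · exact hA i

lemma filter_erase_eq_empty {A : Finset Ω} {e : Ω} (hA : feasible blk A) (he : e ∈ A) :
    (A.erase e).filter (fun e' => blk e' = blk e) = ∅ := by
  rw [filter_erase, erase_eq_empty_iff]
  have he' : e ∈ A.filter (fun e' => blk e' = blk e) := mem_filter.2 ⟨he, rfl⟩
  exact Or.inr (eq_singleton_iff_unique_mem.2
    ⟨he', fun e' he'' => card_le_one.1 (hA (blk e)) e' he'' e he'⟩)

lemma sum_feasible_insert_eq_sum_feasible_mem {M : Type*} [AddCommMonoid M] (g : Finset Ω → M)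
    (e : Ω) :
    ∑ A ∈ univ.filter (fun A => feasible blk A ∧ A.filter (fun e' => blk e' = blk e) = ∅),
        g (insert e A) =
      ∑ A ∈ univ.filter (fun A => feasible blk A ∧ e ∈ A), g A := by
  have hnotMem : ∀ {A : Finset Ω}, A.filter (fun e' => blk e' = blk e) = ∅ → e ∉ A :=
    fun h he => filter_eq_empty_iff.1 h he rfl
  refine sum_nbij' (insert e) (fun A => A.erase e) ?_ ?_ ?_ ?_ (fun _ _ => rfl)
  · simp only [mem_filter, mem_univ, true_and]
    exact fun A ⟨hA, he⟩ => ⟨feasible_insert hA he, mem_insert_self e A⟩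
  · simp only [mem_filter, mem_univ, true_and]
    exact fun A ⟨hA, he⟩ => ⟨feasible_of_subset hA (erase_subset e A), filter_erase_eq_empty hA he⟩
  · exact fun A hA => erase_insert (hnotMem (mem_filter.1 hA).2.2)
  · exact fun A hA => insert_erase (mem_filter.1 hA).2.2

lemma blockProb_nonneg {x : Ω → ℝ} (hx : memPolytope blk x) (A : Finset Ω) (i : N) :
    0 ≤ blockProb blk x A i := by
  unfold blockProb
  split
  · linarith [hx.2 i]
  · exact sum_nonneg fun e _ => (hx.1 e).1

lemma blockProb_insert_of_ne (x : Ω → ℝ) (A : Finset Ω) {e : Ω} {i : N} (h : blk e ≠ i) :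
    blockProb blk x (insert e A) i = blockProb blk x A i := by
  rw [blockProb, filter_insert, if_neg h, blockProb]

lemma blockProb_update_of_ne (x : Ω → ℝ) (A : Finset Ω) {e : Ω} (t : ℝ) {i : N}
    (h : blk e ≠ i) : blockProb blk (Function.update x e t) A i = blockProb blk x A i := by
  have heA : e ∉ A.filter (fun e' => blk e' = i) := fun he => h (mem_filter.1 he).2
  unfold blockProb
  rw [sum_update_of_notMem heA, sum_update_of_notMem (by simp [h])]

lemma blockProb_update_self (x : Ω → ℝ) (A : Finset Ω) (e : Ω) (t : ℝ) :
    blockProb blk (Function.update x e t) A (blk e) = blockProb blk x A (blk e) +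
      (t - x e) * ((if e ∈ A then 1 else 0) -
        (if A.filter (fun e' => blk e' = blk e) = ∅ then 1 else 0)) := by
  have hmem : e ∈ A → e ∈ A.filter (fun e' => blk e' = blk e) := fun he => mem_filter.2 ⟨he, rfl⟩
  unfold blockProb
  split_ifs with hempty heA heA
  · exact absurd (hempty ▸ hmem heA) (notMem_empty e)
  · rw [sum_update_of_mem_eq_add_sub (by simp)]
    ring
  · rw [sum_update_of_mem_eq_add_sub (hmem heA)]
    ring
  · rw [sum_update_of_notMem (fun he => heA (mem_filter.1 he).1)]
    ring


lemma memPolytope_of_nonneg_of_blockSum_le {x : Ω → ℝ} (hx : ∀ e, 0 ≤ x e)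
    (hsum : ∀ i, blockSum blk x i ≤ 1) : memPolytope blk x :=
  ⟨fun e => ⟨hx e, (single_le_sum (fun e' _ => hx e') (by simp)).trans (hsum (blk e))⟩, hsum⟩

lemma memPolytope_update {x : Ω → ℝ} (hx : memPolytope blk x) {e : Ω} {t : ℝ} (ht : x e ≤ t)
    (hsum : blockSum blk (Function.update x e t) (blk e) ≤ 1) :
    memPolytope blk (Function.update x e t) := by
  refine memPolytope_of_nonneg_of_blockSum_le (fun e' => ?_) (fun i => ?_)
  · rcases eq_or_ne e' e with rfl | h
    · simpa using (hx.1 e').1.trans ht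
    · simpa [h] using (hx.1 e').1
  · rcases eq_or_ne (blk e) i with rfl | h
    · exact hsum
    · exact (blockSum_update_of_ne x t h).trans_le (hx.2 i)

lemma pme_update (F : Finset Ω → ℝ) (x : Ω → ℝ) (e : Ω) (t : ℝ) :
    pme blk F (Function.update x e t) = pme blk F x + (t - x e) *
      ∑ A ∈ univ.filter (fun A => feasible blk A ∧ A.filter (fun e' => blk e' = blk e) = ∅),
        (F (insert e A) - F A) * ∏ i ∈ univ.erase (blk e), blockProb blk x A i := by
  set Q : Finset Ω → ℝ := fun A => ∏ i ∈ univ.erase (blk e), blockProb blk x A i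
  have hprod : ∀ y A, ∏ i, blockProb blk y A i =
      blockProb blk y A (blk e) * ∏ i ∈ univ.erase (blk e), blockProb blk y A i :=
    fun y A => (mul_prod_erase _ _ (mem_univ _)).symm
  have hQ_update : ∀ A, ∏ i ∈ univ.erase (blk e), blockProb blk (Function.update x e t) A i = Q A :=
    fun A => prod_congr rfl fun i hi => blockProb_update_of_ne x A t (ne_of_mem_erase hi).symm
  have hQ_insert : ∀ A, Q (insert e A) = Q A :=
    fun A => prod_congr rfl fun i hi => blockProb_insert_of_ne x A (ne_of_mem_erase hi).symm
  have hterm : ∀ A, F A * ∏ i, blockProb blk (Function.update x e t) A i =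
      F A * ∏ i, blockProb blk x A i + (t - x e) * ((if e ∈ A then F A * Q A else 0) -
        (if A.filter (fun e' => blk e' = blk e) = ∅ then F A * Q A else 0)) := by
    intro A
    rw [hprod, hprod, hQ_update, blockProb_update_self]
    split_ifs <;> ring
  unfold pme
  rw [sum_congr rfl fun A _ => hterm A, sum_add_distrib, ← mul_sum, sum_sub_distrib,
    ← sum_filter, ← sum_filter, filter_filter, filter_filter,
    ← sum_feasible_insert_eq_sum_feasible_mem (fun A => F A * Q A), ← sum_sub_distrib]
  simp only [hQ_insert, sub_mul]
  rfl

lemma pme_le_pme_update {F : Finset Ω → ℝ} (hmono : Monotone F) {x : Ω → ℝ}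
    (hx : memPolytope blk x) (e : Ω) {t : ℝ} (ht : x e ≤ t) :
    pme blk F x ≤ pme blk F (Function.update x e t) := by
  rw [pme_update]
  refine le_add_of_nonneg_right (mul_nonneg (sub_nonneg.2 ht) (sum_nonneg fun A _ => ?_))
  exact mul_nonneg (sub_nonneg.2 (hmono (subset_insert e A)))
    (prod_nonneg fun i _ => blockProb_nonneg hx A i)

lemma exists_blockSum_eq_one {F : Finset Ω → ℝ} (hmono : Monotone F) {x : Ω → ℝ}
    (hx : memPolytope blk x) (e : Ω) :
    ∃ x', memPolytope blk x' ∧ blockSum blk x' (blk e) = 1 ∧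
      (∀ i ≠ blk e, blockSum blk x' i = blockSum blk x i) ∧ pme blk F x ≤ pme blk F x' := by
  have hslack : blockSum blk x (blk e) ≤ 1 := hx.2 (blk e)
  have ht : x e ≤ x e + (1 - blockSum blk x (blk e)) := by linarith
  have hfull : blockSum blk (Function.update x e (x e + (1 - blockSum blk x (blk e)))) (blk e)
      = 1 := by
    rw [blockSum_update_self]
    ring
  exact ⟨_, memPolytope_update hx ht hfull.le, hfull,
    fun i hi => blockSum_update_of_ne x _ (Ne.symm hi), pme_le_pme_update hmono hx e ht⟩

lemma exists_blockSum_eq_one_on (hblk : Function.Surjective blk) {F : Finset Ω → ℝ}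
    (hmono : Monotone F) {x : Ω → ℝ} (hx : memPolytope blk x) (S : Finset N) :
    ∃ x', memPolytope blk x' ∧ (∀ i ∈ S, blockSum blk x' i = 1) ∧
      pme blk F x ≤ pme blk F x' := by
  induction S using Finset.induction_on with
  | empty => exact ⟨x, hx, by simp, le_rfl⟩
  | insert i S hiS ih =>
    obtain ⟨y, hy, hyS, hxy⟩ := ih
    obtain ⟨e, rfl⟩ := hblk i
    obtain ⟨z, hz, hze, hzy, hyz⟩ := exists_blockSum_eq_one hmono hy e
    refine ⟨z, hz, fun j hj => ?_, hxy.trans hyz⟩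
    rcases mem_insert.1 hj with rfl | hj
    · exact hze
    · rw [hzy j (ne_of_mem_of_not_mem hj hiS)]
      exact hyS j hj

lemma exists_memFace_pme_le (hblk : Function.Surjective blk) {F : Finset Ω → ℝ}
    (hmono : Monotone F) {x : Ω → ℝ} (hx : memPolytope blk x) :
    ∃ x', memFace blk x' ∧ pme blk F x ≤ pme blk F x' := by
  obtain ⟨x', hx', hfull, hle⟩ := exists_blockSum_eq_one_on hblk hmono hx univ
  exact ⟨x', ⟨hx'.1, fun i => hfull i (mem_univ i)⟩, hle⟩

lemma memPolytope_indicator {A : Finset Ω} (hA : feasible blk A) :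
    memPolytope blk (fun e => if e ∈ A then 1 else 0) :=
  memPolytope_of_nonneg_of_blockSum_le (fun e => by positivity)
    fun i => by rw [blockSum_indicator]; exact_mod_cast hA i

lemma blockProb_indicator {A C : Finset Ω} (hA : feasible blk A) (hC : feasible blk C) (i : N) :
    blockProb blk (fun e => if e ∈ A then 1 else 0) C i =
      if C.filter (fun e => blk e = i) = A.filter (fun e => blk e = i) then 1 else 0 := by
  change (if _ then 1 - blockSum blk _ i else _) = _
  rw [blockSum_indicator]
  rcases eq_empty_or_eq_singleton_of_card_le_one (hC i) with hc | ⟨c, hc⟩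
  · rcases eq_empty_or_eq_singleton_of_card_le_one (hA i) with ha | ⟨a, ha⟩ <;> simp [hc, ha]
  · have hcC : c ∈ C.filter (fun e => blk e = i) := hc ▸ mem_singleton_self c
    rw [if_neg (by simp [hc]), hc, sum_singleton]
    by_cases hcA : c ∈ A
    · have hca : c ∈ A.filter (fun e => blk e = i) := mem_filter.2 ⟨hcA, (mem_filter.1 hcC).2⟩
      rw [if_pos hcA, if_pos (eq_singleton_iff_unique_mem.2
        ⟨hca, fun e he => card_le_one.1 (hA i) e he c hca⟩).symm]
    · rw [if_neg hcA, if_neg fun h => hcA (mem_filter.1 (h ▸ mem_singleton_self c)).1]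

lemma pme_indicator (F : Finset Ω → ℝ) {A : Finset Ω} (hA : feasible blk A) :
    pme blk F (fun e => if e ∈ A then 1 else 0) = F A := by
  unfold pme
  rw [sum_eq_single_of_mem A (by simpa using hA) fun C hC hCA => ?_]
  · simp [blockProb_indicator hA hA]
  · rw [prod_congr rfl fun i _ => blockProb_indicator hA (mem_filter.1 hC).2 i, prod_boole,
      if_neg, mul_zero]
    refine fun h => hCA (ext fun e => ?_)
    simpa using congrArg (e ∈ ·) (h (blk e) (mem_univ _))

end PartitionMatroid

theorem pme_max_on_face_general {N Ω : Type*} [Fintype N] [Fintype Ω]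
    (blk : Ω → N) (hblk : Function.Surjective blk)
    (F : Finset Ω → ℝ)
    (hmono : ∀ A B : Finset Ω, A ⊆ B → F A ≤ F B) :
    (∀ x : Ω → ℝ, memPolytope blk x →
      ∃ x' : Ω → ℝ, memFace blk x' ∧ pme blk F x ≤ pme blk F x') ∧
    (∀ A : Finset Ω, feasible blk A →
      ∃ x : Ω → ℝ, memFace blk x ∧ F A ≤ pme blk F x) := by
  have hF : Monotone F := fun A B => hmono A B
  have face (x : Ω → ℝ) (hx : memPolytope blk x) :
      ∃ x', memFace blk x' ∧ pme blk F x ≤ pme blk F x' :=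
    exists_memFace_pme_le hblk hF hx
  refine ⟨face, fun A hA => ?_⟩
  obtain ⟨x, hx, hle⟩ := face _ (memPolytope_indicator hA)
  exact ⟨x, hx, (pme_indicator F hA).ge.trans hle⟩

/-- for normalized monotone `F`: (a) every point of the partition matroid
polytope is dominated by a point of the categorical face, so the maximum of the PME over
the polytope is attained on the face; (b) the maximum of the PME over the face is at
least `max_{A ∈ I} F(A)`. -/
theorem pme_max_on_face {N Ω : Type*} [Fintype N] [Fintype Ω]
    (blk : Ω → N) (hblk : Function.Surjective blk)
    (F : Finset Ω → ℝ)
    (hnorm : F ∅ = 0)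
    (hmono : ∀ A B : Finset Ω, A ⊆ B → F A ≤ F B) :
    (∀ x : Ω → ℝ, memPolytope blk x →
      ∃ x' : Ω → ℝ, memFace blk x' ∧ pme blk F x ≤ pme blk F x') ∧
    (∀ A : Finset Ω, feasible blk A →
      ∃ x : Ω → ℝ, memFace blk x ∧ F A ≤ pme blk F x) :=
  pme_max_on_face_general blk hblk F hmono
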